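/- The infinitary abstraction preserves the ω-power: for every L ⊆ Σ*, α_{≤ω}(L^ω) = (α_*(L))^ω, where the abstract ω-power of 𝒰 ⊆ 𝒬 is defined as α_{≤ω}(γ_*(𝒰)^ω). -/

import Mathlib

variable {Q : Type*} {A : Type*}

/-- Reachability in a nondeterministic automaton: `q` is reachable from `p` reading `w`. -/
def Reach (δ : Q → A → Set Q) : Q → List A → Q → Prop
  | p, [], q => p = q
  | p, a :: w, q => ∃ r ∈ δ p a, Reach δ r w q

/-- Reachability visiting some final state along the way (possibly the endpoints). -/
def ReachF (δ : Q → A → Set Q) (Fs : Set Q) (p : Q) (w : List A) (q : Q) : Prop :=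
  ∃ u v r, w = u ++ v ∧ r ∈ Fs ∧ Reach δ p u r ∧ Reach δ r v q

/-- The relation ∼ : `w ∼ u` iff for all states `p q`, reachability and
reachability-through-final-states via `w` and via `u` coincide. -/
def Sim (δ : Q → A → Set Q) (Fs : Set Q) (w u : List A) : Prop :=
  ∀ p q : Q, (Reach δ p w q ↔ Reach δ p u q) ∧ (ReachF δ Fs p w q ↔ ReachF δ Fs p u q)

/-- The class of a word in 𝒬 = Σ⁺/∼ ⊎ {[ε]} : for a nonempty word its ∼-class,
and `[ε] = {ε}` for the empty word. -/
def wordClass (δ : Q → A → Set Q) (Fs : Set Q) (w : List A) : Set (List A) :=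
  {u | (w = [] ∧ u = []) ∨ (w ≠ [] ∧ u ≠ [] ∧ Sim δ Fs w u)}

/-- `C` is an element of 𝒬. -/
def IsClass (δ : Q → A → Set Q) (Fs : Set Q) (C : Set (List A)) : Prop :=
  ∃ w : List A, C = wordClass δ Fs w

/-- Elementwise concatenation of languages of finite words. -/
def mulSet (L M : Set (List A)) : Set (List A) := Set.image2 (· ++ ·) L M

/-- Monoid multiplication of classes: the class of the concatenation of representatives. -/
def classMul (δ : Q → A → Set Q) (Fs : Set Q) (C D : Set (List A)) : Set (List A) :=
  {v | ∃ w ∈ C, ∃ u ∈ D, v ∈ wordClass δ Fs (w ++ u)}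

/-- Finite star of a language. -/
def starSet (L : Set (List A)) : Set (List A) :=
  {w | ∃ l : List (List A), (∀ u ∈ l, u ∈ L) ∧ w = l.flatten}

/-- Possibly infinite words over `A` : Σ^{≤ω}, as stable `Option`-valued streams. -/
def Word (A : Type*) : Type _ := {g : ℕ → Option A // ∀ n, g n = none → g (n + 1) = none}

/-- A finite word as an element of Σ^{≤ω}. -/
def ofList (w : List A) : Word A :=
  ⟨fun n => w[n]?, fun n h => by
    rw [List.getElem?_eq_none_iff] at *
    omega⟩

/-- An infinite word as an element of Σ^{≤ω}. -/
def ofStream (s : ℕ → A) : Word A := ⟨fun n => some (s n), fun n h => by simp at h⟩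

/- The (possibly infinite) concatenation `f 0 · f 1 · f 2 ⋯` of a sequence of finite
words, as an element of Σ^{≤ω}. -/
open Classical in
noncomputable def prodWord (f : ℕ → List A) : Word A :=
  ⟨fun n =>
    if h : ∃ k, n < ((List.range k).flatMap f).length then
      ((List.range h.choose).flatMap f)[n]?
    else none, by
    intro n hn
    dsimp only at hn ⊢
    by_cases h : ∃ k, n < ((List.range k).flatMap f).length
    · exfalso
      rw [dif_pos h, List.getElem?_eq_none_iff] at hn
      have := h.choose_spec
      omega
    · have h2 : ¬ ∃ k, n + 1 < ((List.range k).flatMap f).length := by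
        push_neg at h ⊢
        intro k
        have := h k
        omega
      rw [dif_neg h2]⟩

/-- Concatenation of a finite word with a possibly infinite word. -/
def catWord (u : List A) (w : Word A) : Word A :=
  ⟨fun n => if n < u.length then u[n]? else w.1 (n - u.length), by
    intro n hn
    dsimp only at hn ⊢
    by_cases h : n < u.length
    · exfalso
      rw [if_pos h, List.getElem?_eq_none_iff] at hn
      omega
    · rw [if_neg h] at hn
      have h2 : ¬ n + 1 < u.length := by omega
      rw [if_neg h2]
      have h3 : n + 1 - u.length = (n - u.length) + 1 := by omega
      rw [h3]
      exact w.2 _ hn⟩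

/-- `CD^ω` : all words `w₀w₁w₂⋯` with `w₀ ∈ C` and `wᵢ ∈ D` for `i ≥ 1`. -/
def omegaProd (C D : Set (List A)) : Set (Word A) :=
  {w | ∃ f : ℕ → List A, f 0 ∈ C ∧ (∀ i, 1 ≤ i → f i ∈ D) ∧ w = prodWord f}

/-- `L^ω` : all words `w₁w₂w₃⋯` with all `wᵢ ∈ L`. -/
def omegaPow (L : Set (List A)) : Set (Word A) :=
  {w | ∃ f : ℕ → List A, (∀ i, f i ∈ L) ∧ w = prodWord f}

/-- Acceptance of a finite word (as an NFA). -/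
def NFAAccepts (δ : Q → A → Set Q) (q0 : Q) (Fs : Set Q) (w : List A) : Prop :=
  ∃ q ∈ Fs, Reach δ q0 w q

/-- Büchi acceptance of an infinite word: a run from `q0` visiting `Fs` infinitely often. -/
def BuchiAccepts (δ : Q → A → Set Q) (q0 : Q) (Fs : Set Q) (s : ℕ → A) : Prop :=
  ∃ r : ℕ → Q, r 0 = q0 ∧ (∀ n, r (n + 1) ∈ δ (r n) (s n)) ∧ {n | r n ∈ Fs}.Infinite

/-- The language `L(𝔄) ⊆ Σ^{≤ω}` of the extended Büchi automaton: finite words accepted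
as an NFA together with infinite words accepted as a Büchi automaton. -/
def LangOf (δ : Q → A → Set Q) (q0 : Q) (Fs : Set Q) : Set (Word A) :=
  {w | (∃ l : List A, w = ofList l ∧ NFAAccepts δ q0 Fs l) ∨
       (∃ s : ℕ → A, w = ofStream s ∧ BuchiAccepts δ q0 Fs s)}

/-- The set 𝒬 of classes, as a type. -/
def QClass (δ : Q → A → Set Q) (Fs : Set Q) : Type _ := {C : Set (List A) // IsClass δ Fs C}

/-- The set 𝓒 of pairs `(C, D)` of classes with `CD = C` and `DD = D`, as a type. -/
def CPair (δ : Q → A → Set Q) (Fs : Set Q) : Type _ :=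
  {p : Set (List A) × Set (List A) //
    IsClass δ Fs p.1 ∧ IsClass δ Fs p.2 ∧
    classMul δ Fs p.1 p.2 = p.1 ∧ classMul δ Fs p.2 p.2 = p.2}

/-- The language `CD^ω` denoted by an element of 𝓒. -/
def concPair {δ : Q → A → Set Q} {Fs : Set Q} (p : CPair δ Fs) : Set (Word A) :=
  omegaProd p.1.1 p.1.2

/-- A subset 𝒱 ⊆ 𝓒 is closed: whenever `UV^ω ∩ CD^ω ≠ ∅` for `(C,D) ∈ 𝒱` and
`(U,V) ∈ 𝓒`, then `(U,V) ∈ 𝒱`. -/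
def IsClosedC {δ : Q → A → Set Q} {Fs : Set Q} (𝒱 : Set (CPair δ Fs)) : Prop :=
  ∀ p ∈ 𝒱, ∀ q : CPair δ Fs, (concPair q ∩ concPair p).Nonempty → q ∈ 𝒱

/-- Pre-abstraction 𝔣. -/
def frakF (δ : Q → A → Set Q) (Fs : Set Q) (V : Set (Word A)) : Set (CPair δ Fs) :=
  {p | (concPair p ∩ V).Nonempty}

/-- Pre-concretization 𝔤. -/
def frakG {δ : Q → A → Set Q} {Fs : Set Q} (𝒱 : Set (CPair δ Fs)) : Set (Word A) :=
  ⋃ p ∈ 𝒱, concPair p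

/-- Closure 𝔠(𝒱) = ⋃_{n ≥ 1} (𝔣 ∘ 𝔤)ⁿ(𝒱). -/
def frakC {δ : Q → A → Set Q} {Fs : Set Q} (𝒱 : Set (CPair δ Fs)) : Set (CPair δ Fs) :=
  ⋃ n : ℕ, (fun 𝒲 => frakF δ Fs (frakG 𝒲))^[n + 1] 𝒱

/-- Abstraction α_* -/
def alphaStar (δ : Q → A → Set Q) (Fs : Set Q) (U : Set (List A)) : Set (QClass δ Fs) :=
  {C | (C.1 ∩ U).Nonempty}

/-- Concretization γ_* -/
def gammaStar {δ : Q → A → Set Q} {Fs : Set Q} (𝒰 : Set (QClass δ Fs)) : Set (List A) :=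
  ⋃ C ∈ 𝒰, C.1

/-- Abstraction α_{≤ω}. -/
def alphaOmega (δ : Q → A → Set Q) (Fs : Set Q) (V : Set (Word A)) : Set (CPair δ Fs) :=
  frakC (frakF δ Fs V)

/-- Concretization γ_{≤ω}. -/
def gammaOmega {δ : Q → A → Set Q} {Fs : Set Q} (𝒱 : Set (CPair δ Fs)) : Set (Word A) :=
  frakG 𝒱

/-!
Since `L ⊆ γ_*(α_*(L))`, one inclusion is monotonicity. For the other, take `w₀w₁⋯` with
each `wᵢ` equivalent to some `uᵢ ∈ L`. Colouring the pair `i < j` by the class of the block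
`wᵢ⋯wⱼ₋₁` (finitely many colours), Ramsey's theorem yields `m₀ < m₁ < ⋯` along which all
blocks share one class `[e]`; regrouping at `m₁ < m₂ < ⋯` writes the word as `x e₁ e₂ ⋯` with
`[x][e] = [x]` and `[e][e] = [e]`, and the same regrouping puts `u₀u₁⋯ ∈ L^ω` into `[x][e]^ω`.
So `𝔣(γ_*(α_*(L))^ω) ⊆ 𝔣(𝔤(𝔣(L^ω)))`, and the extra `𝔣 ∘ 𝔤` is absorbed by the closure.
-/

theorem Set.Infinite.exists_infinite_inter_fiber {α κ : Type*} [Finite κ] {S : Set α}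
    (hS : S.Infinite) (c : α → κ) : ∃ k, (S ∩ c ⁻¹' {k}).Infinite := by
  by_contra! h
  exact hS ((Set.finite_iUnion h).subset fun x hx => Set.mem_iUnion.2 ⟨c x, hx, rfl⟩)

section Ramsey

variable {κ : Type*} [Finite κ] (c : ℕ → ℕ → κ)

theorem exists_infinite_subset_color_const {S : Set ℕ} (hS : S.Infinite) :
    ∃ a ∈ S, ∃ k : κ, ∃ T ⊆ S, T.Infinite ∧ ∀ x ∈ T, a < x ∧ c a x = k := by
  obtain ⟨a, ha⟩ := hS.nonempty
  obtain ⟨k, hk⟩ := (hS.sdiff (Set.finite_Iic a)).exists_infinite_inter_fiber (c a)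
  refine ⟨a, ha, k, _, fun x hx => hx.1.1, hk, fun x hx => ⟨?_, hx.2⟩⟩
  simpa using hx.1.2

theorem exists_strictMono_color_eq_left :
    ∃ (φ : ℕ → ℕ) (k : ℕ → κ), StrictMono φ ∧ ∀ i j, i < j → c (φ i) (φ j) = k i := by
  choose a ha k T hTS hT hTc using fun S : {S : Set ℕ // S.Infinite} =>
    exists_infinite_subset_color_const c S.2
  let chain : ℕ → {S : Set ℕ // S.Infinite} :=
    fun n => (fun S => ⟨T S, hT S⟩)^[n] ⟨Set.univ, Set.infinite_univ⟩
  have hchain : ∀ n, chain (n + 1) = ⟨T (chain n), hT (chain n)⟩ := fun n =>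
    Function.iterate_succ_apply' _ _ _
  have hanti : Antitone fun n => (chain n).1 := antitone_nat_of_succ_le fun n => by
    rw [hchain n]
    exact hTS _
  have hnext : ∀ i j, i < j → a (chain i) < a (chain j) ∧
      c (a (chain i)) (a (chain j)) = k (chain i) := fun i j hij =>
    hTc _ _ (by simpa [hchain] using hanti (Nat.succ_le_of_lt hij) (ha (chain j)))
  exact ⟨fun n => a (chain n), fun n => k (chain n),
    strictMono_nat_of_lt_succ fun n => (hnext n _ n.lt_succ_self).1,
    fun i j hij => (hnext i j hij).2⟩

theorem exists_strictMono_color_const :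
    ∃ (φ : ℕ → ℕ) (k : κ), StrictMono φ ∧ ∀ i j, i < j → c (φ i) (φ j) = k := by
  obtain ⟨φ, k, hφ, hk⟩ := exists_strictMono_color_eq_left c
  obtain ⟨k₀, hk₀⟩ := Finite.exists_infinite_fiber k
  have hinf : {n | k n = k₀}.Infinite := Set.infinite_coe_iff.mp hk₀
  refine ⟨φ ∘ Nat.nth (k · = k₀), k₀, hφ.comp (Nat.nth_strictMono hinf), ?_⟩
  intro i j hij
  rw [Function.comp_apply, Function.comp_apply, hk _ _ (Nat.nth_strictMono hinf hij)]
  exact Nat.nth_mem_of_infinite hinf i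

end Ramsey

section Profile

variable {δ : Q → A → Set Q} {Fs : Set Q}

theorem reach_append {p q : Q} (u v : List A) :
    Reach δ p (u ++ v) q ↔ ∃ r, Reach δ p u r ∧ Reach δ r v q := by
  induction u generalizing p with
  | nil => exact ⟨fun h => ⟨p, rfl, h⟩, fun ⟨_, hr, h⟩ => hr ▸ h⟩
  | cons a u ih =>
    simp only [List.cons_append, Reach, ih]
    exact ⟨fun ⟨r, hr, s, h₁, h₂⟩ => ⟨s, ⟨r, hr, h₁⟩, h₂⟩,
      fun ⟨s, ⟨r, hr, h₁⟩, h₂⟩ => ⟨r, hr, s, h₁, h₂⟩⟩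

theorem reachF_append {p q : Q} (u v : List A) :
    ReachF δ Fs p (u ++ v) q ↔
      (∃ r, ReachF δ Fs p u r ∧ Reach δ r v q) ∨ (∃ r, Reach δ p u r ∧ ReachF δ Fs r v q) := by
  constructor
  · rintro ⟨u', v', r, heq, hr, h₁, h₂⟩
    rcases List.append_eq_append_iff.mp heq.symm with ⟨a, rfl, rfl⟩ | ⟨c, rfl, rfl⟩
    · obtain ⟨s, hs₁, hs₂⟩ := (reach_append _ _).mp h₂
      exact Or.inl ⟨s, ⟨u', a, r, rfl, hr, h₁, hs₁⟩, hs₂⟩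
    · obtain ⟨s, hs₁, hs₂⟩ := (reach_append _ _).mp h₁
      exact Or.inr ⟨s, hs₁, c, v', r, rfl, hr, hs₂, h₂⟩
  · rintro (⟨r, ⟨u', v', s, rfl, hs, h₁, h₂⟩, h₃⟩ | ⟨r, h₁, u', v', s, rfl, hs, h₂, h₃⟩)
    · exact ⟨u', v' ++ v, s, List.append_assoc .., hs, h₁, (reach_append _ _).mpr ⟨r, h₂, h₃⟩⟩
    · exact ⟨u ++ u', v', s, (List.append_assoc ..).symm, hs,
        (reach_append _ _).mpr ⟨r, h₁, h₂⟩, h₃⟩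

theorem Sim.append {w u w' u' : List A} (h : Sim δ Fs w u) (h' : Sim δ Fs w' u') :
    Sim δ Fs (w ++ w') (u ++ u') := fun p q => by
  rw [reach_append, reach_append, reachF_append, reachF_append]
  exact ⟨exists_congr fun r => and_congr (h p r).1 (h' r q).1,
    or_congr (exists_congr fun r => and_congr (h p r).2 (h' r q).1)
      (exists_congr fun r => and_congr (h p r).1 (h' r q).2)⟩

variable (δ Fs) in
/-- The data determining the class of a word; it ranges over a finite type when `Q` is finite. -/
def profile (w : List A) : (Q → Q → Prop × Prop) × Prop :=
  (fun p q => (Reach δ p w q, ReachF δ Fs p w q), w = [])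

theorem profile_eq_profile_iff {w u : List A} :
    profile δ Fs w = profile δ Fs u ↔ Sim δ Fs w u ∧ (w = [] ↔ u = []) := by
  simp only [profile, Prod.ext_iff, funext_iff, eq_iff_iff, Sim]

theorem mem_wordClass_iff {w u : List A} :
    u ∈ wordClass δ Fs w ↔ profile δ Fs w = profile δ Fs u := by
  rw [profile_eq_profile_iff, wordClass, Set.mem_ofPred_eq]
  by_cases hw : w = [] <;> by_cases hu : u = [] <;> simp [hw, hu, Sim]

theorem profile_append {w u w' u' : List A} (h : profile δ Fs w = profile δ Fs u)
    (h' : profile δ Fs w' = profile δ Fs u') :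
    profile δ Fs (w ++ w') = profile δ Fs (u ++ u') := by
  rw [profile_eq_profile_iff] at *
  simp only [List.append_eq_nil_iff]
  exact ⟨h.1.append h'.1, and_congr h.2 h'.2⟩

theorem wordClass_congr {w u : List A} (h : profile δ Fs w = profile δ Fs u) :
    wordClass δ Fs w = wordClass δ Fs u := by
  ext v
  rw [mem_wordClass_iff, mem_wordClass_iff, h]

theorem classMul_wordClass (w u : List A) :
    classMul δ Fs (wordClass δ Fs w) (wordClass δ Fs u) = wordClass δ Fs (w ++ u) := by
  ext v
  simp only [classMul, mem_wordClass_iff, Set.mem_ofPred_eq]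
  refine ⟨fun ⟨w', hw', u', hu', hv⟩ => (profile_append hw' hu').trans hv,
    fun hv => ⟨w, rfl, u, rfl, hv⟩⟩

theorem mem_gammaStar_alphaStar_iff {L : Set (List A)} {w : List A} :
    w ∈ gammaStar (alphaStar δ Fs L) ↔ ∃ u ∈ L, profile δ Fs w = profile δ Fs u := by
  simp only [gammaStar, alphaStar, Set.mem_iUnion, Set.mem_ofPred_eq, exists_prop]
  constructor
  · rintro ⟨⟨C, x, rfl⟩, ⟨u, hu, huL⟩, hw⟩
    exact ⟨u, huL, (mem_wordClass_iff.mp hw).symm.trans (mem_wordClass_iff.mp hu)⟩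
  · rintro ⟨u, huL, hwu⟩
    exact ⟨⟨wordClass δ Fs w, w, rfl⟩, ⟨u, mem_wordClass_iff.mpr hwu, huL⟩,
      mem_wordClass_iff.mpr rfl⟩

variable (δ Fs) in
def idemPair (x e : List A) (hxe : profile δ Fs (x ++ e) = profile δ Fs x)
    (hee : profile δ Fs (e ++ e) = profile δ Fs e) : CPair δ Fs :=
  ⟨(wordClass δ Fs x, wordClass δ Fs e), ⟨x, rfl⟩, ⟨e, rfl⟩,
    by rw [classMul_wordClass, wordClass_congr hxe],
    by rw [classMul_wordClass, wordClass_congr hee]⟩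

end Profile

section Blocks

theorem List.IsPrefix.getElem?_eq {α : Type*} {l₁ l₂ : List α} (h : l₁ <+: l₂) {n : ℕ}
    (hn : n < l₁.length) : l₂[n]? = l₁[n]? := by
  rw [List.prefix_iff_getElem?.mp h n hn, List.getElem?_eq_getElem hn]

def block (f : ℕ → List A) (i j : ℕ) : List A := (List.range' i (j - i)).flatMap f

theorem block_zero_left (f : ℕ → List A) (k : ℕ) : block f 0 k = (List.range k).flatMap f := by
  rw [block, List.range_eq_range', Nat.sub_zero]

theorem block_append_block (f : ℕ → List A) {i j k : ℕ} (hij : i ≤ j) (hjk : j ≤ k) :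
    block f i j ++ block f j k = block f i k := by
  have h := List.range'_append (s := i) (m := j - i) (n := k - j) (step := 1)
  rw [one_mul, Nat.add_sub_cancel' hij, show j - i + (k - j) = k - i by omega] at h
  rw [block, block, block, ← List.flatMap_append, h]

theorem block_zero_prefix (f : ℕ → List A) {k l : ℕ} (h : k ≤ l) : block f 0 k <+: block f 0 l :=
  block_append_block f k.zero_le h ▸ List.prefix_append _ _

theorem profile_block_congr {δ : Q → A → Set Q} {Fs : Set Q} {f g : ℕ → List A}
    (h : ∀ t, profile δ Fs (f t) = profile δ Fs (g t)) (i j : ℕ) :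
    profile δ Fs (block f i j) = profile δ Fs (block g i j) := by
  rw [block, block]
  induction List.range' i (j - i) with
  | nil => rfl
  | cons a l ih => exact profile_append (h a) ih

theorem prodWord_apply_of_lt_length (f : ℕ → List A) {k n : ℕ} (h : n < (block f 0 k).length) :
    (prodWord f).1 n = (block f 0 k)[n]? := by
  have hex : ∃ m, n < ((List.range m).flatMap f).length := ⟨k, by rwa [← block_zero_left]⟩
  classical
  change dite _ _ _ = _
  rw [dif_pos hex, ← block_zero_left]
  have hc : n < (block f 0 hex.choose).length := by rw [block_zero_left]; exact hex.choose_spec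
  rcases le_total hex.choose k with hle | hle
  · exact ((block_zero_prefix f hle).getElem?_eq hc).symm
  · exact (block_zero_prefix f hle).getElem?_eq h

theorem prodWord_eq_of_prefix {f g : ℕ → List A}
    (hfg : ∀ k, ∃ l, block f 0 k <+: block g 0 l) (hgf : ∀ k, ∃ l, block g 0 k <+: block f 0 l) :
    prodWord f = prodWord g := by
  refine Subtype.ext (funext fun n => ?_)
  by_cases hf : ∃ k, n < (block f 0 k).length
  · obtain ⟨k, hk⟩ := hf
    obtain ⟨l, hl⟩ := hfg k
    rw [prodWord_apply_of_lt_length f hk, prodWord_apply_of_lt_length g (hk.trans_le hl.length_le),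
      hl.getElem?_eq hk]
  · have hg : ¬ ∃ k, n < (block g 0 k).length := fun ⟨k, hk⟩ =>
      let ⟨l, hl⟩ := hgf k
      hf ⟨l, hk.trans_le hl.length_le⟩
    simp only [block_zero_left] at hf hg
    classical
    change dite _ _ _ = dite _ _ _
    rw [dif_neg hf, dif_neg hg]

theorem prodWord_eq_prodWord_block {n : ℕ → ℕ} (hn : StrictMono n) (hn0 : n 0 = 0)
    (f : ℕ → List A) : prodWord f = prodWord fun k => block f (n k) (n (k + 1)) := by
  have hprefix : ∀ k, block (fun k => block f (n k) (n (k + 1))) 0 k = block f 0 (n k) := by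
    intro k
    induction k with
    | zero => simp [block, hn0]
    | succ k ih =>
      rw [← block_append_block _ k.zero_le k.le_succ, ih, ← block_append_block f (n k).zero_le
        (hn.monotone k.le_succ)]
      simp [block]
  refine prodWord_eq_of_prefix (fun k => ⟨k, ?_⟩) (fun k => ⟨n k, by rw [hprefix]⟩)
  rw [hprefix]
  exact block_zero_prefix f hn.le_apply

end Blocks

section Covering

variable {δ : Q → A → Set Q} {Fs : Set Q}

section RamseyBlocks

variable {f : ℕ → List A} {m : ℕ → ℕ} {P : (Q → Q → Prop × Prop) × Prop}

theorem profile_block_append_block_of_const (hm : StrictMono m)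
    (hP : ∀ i j, i < j → profile δ Fs (block f (m i) (m j)) = P) :
    profile δ Fs (block f (m 0) (m 1) ++ block f (m 0) (m 1)) =
      profile δ Fs (block f (m 0) (m 1)) :=
  calc _ = profile δ Fs (block f (m 0) (m 1) ++ block f (m 1) (m 2)) :=
        profile_append rfl ((hP 0 1 one_pos).trans (hP 1 2 one_lt_two).symm)
    _ = profile δ Fs (block f (m 0) (m 2)) := by
        rw [block_append_block f (hm.monotone zero_le_one) (hm.monotone one_le_two)]
    _ = _ := (hP 0 2 two_pos).trans (hP 0 1 one_pos).symm

theorem profile_block_zero_append_block_of_const (hm : StrictMono m)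
    (hP : ∀ i j, i < j → profile δ Fs (block f (m i) (m j)) = P) :
    profile δ Fs (block f 0 (m 1) ++ block f (m 0) (m 1)) = profile δ Fs (block f 0 (m 1)) :=
  calc _ = profile δ Fs (block f 0 (m 1) ++ block f (m 1) (m 2)) :=
        profile_append rfl ((hP 0 1 one_pos).trans (hP 1 2 one_lt_two).symm)
    _ = profile δ Fs (block f 0 (m 0) ++ block f (m 0) (m 2)) := by
        rw [block_append_block f (m 1).zero_le (hm.monotone one_le_two),
          block_append_block f (m 0).zero_le (hm.monotone zero_le_two)]
    _ = profile δ Fs (block f 0 (m 0) ++ block f (m 0) (m 1)) :=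
        profile_append rfl ((hP 0 2 two_pos).trans (hP 0 1 one_pos).symm)
    _ = _ := by rw [block_append_block f (m 0).zero_le (hm.monotone zero_le_one)]

end RamseyBlocks

variable [Finite Q]

/-- The Ramseyian covering lemma: a product `∏ᵢ [f i]` of classes lies in some `UV^ω` with
`(U, V) ∈ 𝓒`. -/
theorem exists_cPair_forall_prodWord_mem (f : ℕ → List A) :
    ∃ q : CPair δ Fs, ∀ g : ℕ → List A,
      (∀ i, profile δ Fs (f i) = profile δ Fs (g i)) → prodWord g ∈ concPair q := by
  obtain ⟨m, P, hm, hP⟩ := exists_strictMono_color_const fun i j => profile δ Fs (block f i j)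
  refine ⟨idemPair δ Fs _ _ (profile_block_zero_append_block_of_const hm hP)
    (profile_block_append_block_of_const hm hP), fun g hg => ?_⟩
  have hn : StrictMono (Function.update m 0 0) := strictMono_nat_of_lt_succ fun k => by
    rcases k with _ | k
    · simpa using (m 0).zero_le.trans_lt (hm one_pos)
    · simpa using hm k.succ.lt_succ_self
  rw [prodWord_eq_prodWord_block hn (Function.update_self ..) g]
  refine ⟨_, mem_wordClass_iff.mpr ?_, fun k hk => mem_wordClass_iff.mpr ?_, rfl⟩
  · simpa using profile_block_congr hg 0 (m 1)
  · obtain ⟨k, rfl⟩ := Nat.exists_eq_add_of_le' hk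
    simpa [(hP 0 1 one_pos).trans (hP _ _ (k + 1).lt_succ_self).symm]
      using profile_block_congr hg (m (k + 1)) (m (k + 1 + 1))

theorem frakF_omegaPow_gammaStar_alphaStar_subset (L : Set (List A)) :
    frakF δ Fs (omegaPow (gammaStar (alphaStar δ Fs L))) ⊆
      frakF δ Fs (frakG (frakF δ Fs (omegaPow L))) := by
  rintro p ⟨_, hwp, f, hf, rfl⟩
  choose g hgL hfg using fun i => mem_gammaStar_alphaStar_iff.mp (hf i)
  obtain ⟨q, hq⟩ := exists_cPair_forall_prodWord_mem (δ := δ) (Fs := Fs) f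
  exact ⟨prodWord f, hwp,
    Set.mem_biUnion ⟨prodWord g, hq g hfg, g, hgL, rfl⟩ (hq f fun _ => rfl)⟩

end Covering

section Closure

variable {δ : Q → A → Set Q} {Fs : Set Q}

theorem omegaPow_mono : Monotone (omegaPow (A := A)) :=
  fun _ _ h _ ⟨f, hf, hw⟩ => ⟨f, fun i => h (hf i), hw⟩

theorem frakF_mono : Monotone (frakF δ Fs) :=
  fun _ _ h _ ⟨w, hwp, hw⟩ => ⟨w, hwp, h hw⟩

theorem frakG_mono : Monotone (frakG (δ := δ) (Fs := Fs)) :=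
  fun _ _ h => Set.biUnion_subset_biUnion_left h

theorem frakC_mono : Monotone (frakC (δ := δ) (Fs := Fs)) :=
  fun _ _ h => Set.iUnion_mono fun n => (frakF_mono.comp frakG_mono).iterate (n + 1) h

theorem frakC_subset_frakC_of_subset_frakF_frakG {𝒜 𝒲 : Set (CPair δ Fs)}
    (h : 𝒜 ⊆ frakF δ Fs (frakG 𝒲)) : frakC 𝒜 ⊆ frakC 𝒲 :=
  Set.iUnion_subset fun n => ((frakF_mono.comp frakG_mono).iterate (n + 1) h).trans <|
    Set.subset_iUnion_of_subset (n + 1) (Function.iterate_succ_apply _ (n + 1) 𝒲).le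

end Closure

theorem alphaOmega_omegaPow_general {Q A : Type*} [Finite Q]
    (δ : Q → A → Set Q) (Fs : Set Q) (L : Set (List A)) :
    alphaOmega δ Fs (omegaPow L) =
      alphaOmega δ Fs (omegaPow (gammaStar (alphaStar δ Fs L))) := by
  have hL : L ⊆ gammaStar (alphaStar δ Fs L) := fun w hw =>
    mem_gammaStar_alphaStar_iff.mpr ⟨w, hw, rfl⟩
  refine (frakC_mono (frakF_mono (omegaPow_mono hL))).antisymm ?_
  exact frakC_subset_frakC_of_subset_frakF_frakG (frakF_omegaPow_gammaStar_alphaStar_subset L)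

/-- the infinitary abstraction preserves the ω-power:
`α_{≤ω}(L^ω) = (α_*(L))^ω`, where `𝒰^ω := α_{≤ω}(γ_*(𝒰)^ω)`. -/
theorem alphaOmega_omegaPow {Q A : Type*} [Finite Q] [Finite A]
    (δ : Q → A → Set Q) (Fs : Set Q) (L : Set (List A)) :
    alphaOmega δ Fs (omegaPow L) =
      alphaOmega δ Fs (omegaPow (gammaStar (alphaStar δ Fs L))) :=
  alphaOmega_omegaPow_general δ Fs L
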